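/- Let D ≥ 1. Fix functions p_{t|0} : ℝ^D → (0,∞), p_{τ|0} : ℝ^D → (0,∞), and p_{τ|t} : ℝ^D × ℝ^D → (0,∞), (x_τ, x) ↦ p_{τ|t}(x_τ|x), with x ↦ p_{τ|t}(x_τ|x) differentiable for every x_τ and with p_{t|0} differentiable. Define the bridge density p_{t|0,τ}(x|x_τ) = p_{t|0}(x) p_{τ|t}(x_τ|x) / p_{τ|0}(x_τ). Let Π be a probability measure on ℝ^D, define π_{t|0}(x) = ∫ p_{t|0,τ}(x|x_τ) dΠ(x_τ), assumed finite, strictly positive, and differentiable with gradient ∫ ∇_x p_{t|0,τ}(x|x_τ) dΠ(x_τ), and A(x) = (∫ ∇_x ln p_{τ|t}(x_τ|x) · p_{t|0,τ}(x|x_τ) dΠ(x_τ)) / π_{t|0}(x), assumed finite. Then for every x, A(x) = ∇_x ln π_{t|0}(x) − ∇_x ln p_{t|0}(x). -/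

import Mathlib

/-! Since `b = p_{t|0} · p_{τ|t} / p_{τ|0}`, the product rule for logarithmic derivatives gives
pointwise `b ∇ln p_{τ|t} = ∇b − b ∇ln p_{t|0}`. Integrating against `Π`, the right side becomes
`∇π − π ∇ln p_{t|0}`; dividing by `π` and using `∇π / π = ∇ln π` gives the identity. -/

open MeasureTheory Real Set

/-- The gradient of a scalar function on `ℝ^D`, given coordinatewise by the
partial derivatives. -/
noncomputable def grad {D : ℕ} (f : (Fin D → ℝ) → ℝ) (x : Fin D → ℝ) : Fin D → ℝ :=
  fun i => fderiv ℝ f x (Pi.single i 1)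

section Grad

variable {D : ℕ} {f g : (Fin D → ℝ) → ℝ} {x : Fin D → ℝ}

lemma grad_mul (hf : DifferentiableAt ℝ f x) (hg : DifferentiableAt ℝ g x) :
    grad (fun y => f y * g y) x = f x • grad g x + g x • grad f x := by
  funext i
  simp [grad, fderiv_fun_mul hf hg]

lemma grad_div_const (hf : DifferentiableAt ℝ f x) (c : ℝ) :
    grad (fun y => f y / c) x = c⁻¹ • grad f x := by
  funext i
  simp [grad, div_eq_mul_inv, fderiv_mul_const hf]

lemma grad_log (hf : DifferentiableAt ℝ f x) (hx : f x ≠ 0) :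
    grad (fun y => Real.log (f y)) x = (f x)⁻¹ • grad f x := by
  funext i
  simp [grad, (hf.hasFDerivAt.log hx).fderiv]

lemma smul_grad_log_eq_grad_mul_div_sub (hf : DifferentiableAt ℝ f x)
    (hg : DifferentiableAt ℝ g x) (hfx : f x ≠ 0) (hgx : g x ≠ 0) (c : ℝ) :
    (f x * g x / c) • grad (fun y => Real.log (g y)) x
      = grad (fun y => f y * g y / c) x
        - (f x * g x / c) • grad (fun y => Real.log (f y)) x := by
  rw [grad_div_const (f := fun y => f y * g y) (hf.mul hg), grad_mul hf hg, grad_log hf hfx,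
    grad_log hg hgx]
  match_scalars
  · field_simp
  · field_simp
    ring

end Grad

theorem drift_adjustment_score_difference_general
    {D : ℕ}
    (pt0 : (Fin D → ℝ) → ℝ) (pτ0 : (Fin D → ℝ) → ℝ)
    (pτt : (Fin D → ℝ) → (Fin D → ℝ) → ℝ)  -- `pτt xτ x` is `p_{τ|t}(x_τ|x)`
    (hpt0pos : ∀ x, 0 < pt0 x)
    (hpτtpos : ∀ xτ x, 0 < pτt xτ x)
    (hpτtdiff : ∀ xτ, Differentiable ℝ (pτt xτ))
    (hpt0diff : Differentiable ℝ pt0)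
    (Pm : Measure (Fin D → ℝ))
    (b : (Fin D → ℝ) → (Fin D → ℝ) → ℝ)  -- the bridge density `p_{t|0,τ}(x|x_τ)`
    (hb : ∀ xτ x, b xτ x = pt0 x * pτt xτ x / pτ0 xτ)
    (π0 : (Fin D → ℝ) → ℝ) (A : (Fin D → ℝ) → Fin D → ℝ)
    (hπ0int : ∀ x, Integrable (fun xτ => b xτ x) Pm)
    (hπ0 : ∀ x, π0 x = ∫ xτ, b xτ x ∂Pm)
    (hπ0pos : ∀ x, 0 < π0 x)
    (hπ0diff : Differentiable ℝ π0)
    (hπ0gradint : ∀ x, Integrable (fun xτ => grad (fun y => b xτ y) x) Pm)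
    (hπ0grad : ∀ x, grad π0 x = ∫ xτ, grad (fun y => b xτ y) x ∂Pm)
    (hA : ∀ x, A x
      = (π0 x)⁻¹ • ∫ xτ, b xτ x • grad (fun y => Real.log (pτt xτ y)) x ∂Pm) :
    ∀ x, A x = grad (fun y => Real.log (π0 y)) x - grad (fun y => Real.log (pt0 y)) x := by
  intro x
  have hbridge : ∀ xτ, b xτ x • grad (fun y => Real.log (pτt xτ y)) x
      = grad (fun y => b xτ y) x - b xτ x • grad (fun y => Real.log (pt0 y)) x := by
    intro xτ
    simp only [hb]
    exact smul_grad_log_eq_grad_mul_div_sub (hpt0diff x) (hpτtdiff xτ x)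
      (hpt0pos x).ne' (hpτtpos xτ x).ne' (pτ0 xτ)
  have hmix : ∫ xτ, b xτ x • grad (fun y => Real.log (pτt xτ y)) x ∂Pm
      = grad π0 x - π0 x • grad (fun y => Real.log (pt0 y)) x := by
    rw [integral_congr_ae (Filter.Eventually.of_forall hbridge),
      integral_sub (hπ0gradint x) ((hπ0int x).smul_const _), integral_smul_const,
      ← hπ0grad x, ← hπ0 x]
  rw [hA x, hmix, smul_sub, smul_smul, inv_mul_cancel₀ (hπ0pos x).ne', one_smul,
    grad_log (hπ0diff x) (hπ0pos x).ne']

/-- Second drift adjustment identity (score-difference representation) for a constant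
initial value: the drift adjustment `A(x)` of the diffusion bridge mixture transport equals
`∇_x ln π_{t|0}(x) − ∇_x ln p_{t|0}(x)`. -/
theorem drift_adjustment_score_difference
    {D : ℕ} (hD : 1 ≤ D)
    (pt0 : (Fin D → ℝ) → ℝ) (pτ0 : (Fin D → ℝ) → ℝ)
    (pτt : (Fin D → ℝ) → (Fin D → ℝ) → ℝ)  -- `pτt xτ x` is `p_{τ|t}(x_τ|x)`
    (hpt0pos : ∀ x, 0 < pt0 x) (hpτ0pos : ∀ xτ, 0 < pτ0 xτ)
    (hpτtpos : ∀ xτ x, 0 < pτt xτ x)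
    (hpτtdiff : ∀ xτ, Differentiable ℝ (pτt xτ))
    (hpt0diff : Differentiable ℝ pt0)
    (Pm : Measure (Fin D → ℝ)) [IsProbabilityMeasure Pm]
    (b : (Fin D → ℝ) → (Fin D → ℝ) → ℝ)  -- the bridge density `p_{t|0,τ}(x|x_τ)`
    (hb : ∀ xτ x, b xτ x = pt0 x * pτt xτ x / pτ0 xτ)
    (π0 : (Fin D → ℝ) → ℝ) (A : (Fin D → ℝ) → Fin D → ℝ)
    (hπ0int : ∀ x, Integrable (fun xτ => b xτ x) Pm)
    (hπ0 : ∀ x, π0 x = ∫ xτ, b xτ x ∂Pm)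
    (hπ0pos : ∀ x, 0 < π0 x)
    (hπ0diff : Differentiable ℝ π0)
    (hπ0gradint : ∀ x, Integrable (fun xτ => grad (fun y => b xτ y) x) Pm)
    (hπ0grad : ∀ x, grad π0 x = ∫ xτ, grad (fun y => b xτ y) x ∂Pm)
    (hAint : ∀ x, Integrable
      (fun xτ => b xτ x • grad (fun y => Real.log (pτt xτ y)) x) Pm)
    (hA : ∀ x, A x
      = (π0 x)⁻¹ • ∫ xτ, b xτ x • grad (fun y => Real.log (pτt xτ y)) x ∂Pm) :
    ∀ x, A x = grad (fun y => Real.log (π0 y)) x - grad (fun y => Real.log (pt0 y)) x :=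
  drift_adjustment_score_difference_general pt0 pτ0 pτt hpt0pos hpτtpos hpτtdiff hpt0diff Pm b hb π0
    A hπ0int hπ0 hπ0pos hπ0diff hπ0gradint hπ0grad hA
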